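/- Let (μ_t)_{t∈ℝ} be a Hopf deformation of a cocommutative Hopf algebra B with deformed antipodes S_t. Then S_t∘S_{−t} = id for all t ∈ ℝ. -/

import Mathlib

open TensorProduct Coalgebra

variable {B : Type} [Ring B] [HopfAlgebra ℂ B]

/-- The comultiplication `Λ = (id ⊗ τ ⊗ id) ∘ (Δ ⊗ Δ)` of `B ⊗ B`. -/
noncomputable def Lam : B ⊗[ℂ] B →ₗ[ℂ] (B ⊗[ℂ] B) ⊗[ℂ] (B ⊗[ℂ] B) :=
  (TensorProduct.tensorTensorTensorComm ℂ B B B B).toLinearMap ∘ₗ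
    TensorProduct.map (comul (R := ℂ)) (comul (R := ℂ))

/-- The map `b ↦ δ(b)·1 : B → B`. -/
noncomputable def unitCounit : B →ₗ[ℂ] B :=
  Algebra.linearMap ℂ B ∘ₗ counit (R := ℂ)

/-! For each `t`, linear maps from a coalgebra into `B` form a monoid under the convolution
built from `μ_t`, and `S_t` is the convolution inverse of `id`. Compatibility of `Δ` with the
deformation, `Δ ∘ μ_0 = (μ_t ⊗ μ_{-t}) ∘ Λ`, makes `S_t ∘ μ_{-t}` a right inverse of `μ_t` in the
convolution monoid of `B ⊗ B`, while `a ⊗ b ↦ μ_t (S_t b ⊗ S_t a)` is a left inverse; hence `S_t`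
reverses products: `S_t (μ_{-t} (a ⊗ b)) = μ_t (S_t b ⊗ S_t a)`. For cocommutative `B` this
identity makes `S_t ∘ S_{-t}` a right inverse of `S_t`, so it equals `id`. -/

namespace LinearMap

section Convolution

variable {R C C' A : Type*} [CommSemiring R] [AddCommMonoid C] [Module R C] [Coalgebra R C]
  [AddCommMonoid C'] [Module R C'] [Coalgebra R C'] [Semiring A] [Algebra R A]

/-- Convolution with respect to an arbitrary product `m` (Mathlib's `WithConv` convolution only
uses the multiplication of `A`, while here `m` ranges over the deformed products `μ_t`). -/
noncomputable def convBy (m : A ⊗[R] A →ₗ[R] A) (f g : C →ₗ[R] A) : C →ₗ[R] A :=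
  m ∘ₗ map f g ∘ₗ comul

variable (R C A) in
noncomputable def convUnit : C →ₗ[R] A := Algebra.linearMap R A ∘ₗ counit

variable {m : A ⊗[R] A →ₗ[R] A}

theorem convBy_convUnit (hm : ∀ a : A, m (a ⊗ₜ 1) = a) (f : C →ₗ[R] A) :
    convBy m f (convUnit R C A) = f := by
  ext c
  simp [convBy, convUnit, ← map_comp_lTensor, hm]

theorem convUnit_convBy (hm : ∀ a : A, m (1 ⊗ₜ a) = a) (f : C →ₗ[R] A) :
    convBy m (convUnit R C A) f = f := by
  ext c
  simp [convBy, convUnit, ← map_comp_rTensor, hm]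

theorem convBy_assoc (hm : ∀ a b c : A, m (m (a ⊗ₜ b) ⊗ₜ c) = m (a ⊗ₜ m (b ⊗ₜ c)))
    (f g h : C →ₗ[R] A) : convBy m (convBy m f g) h = convBy m f (convBy m g h) := by
  let α := (TensorProduct.assoc R A A A).symm.toLinearMap
  calc convBy m (convBy m f g) h
      = (m ∘ₗ m.rTensor A) ∘ₗ (map (map f g) h ∘ₗ (TensorProduct.assoc R C C C).symm) ∘ₗ
          comul.lTensor C ∘ₗ comul := by
        ext; simp [convBy]
    _ = (m ∘ₗ m.rTensor A ∘ₗ α) ∘ₗ map f (map g h) ∘ₗ comul.lTensor C ∘ₗ comul := by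
        simp only [α, map_map_comp_assoc_symm_eq, comp_assoc]
    _ = (m ∘ₗ m.lTensor A) ∘ₗ map f (map g h) ∘ₗ comul.lTensor C ∘ₗ comul := by
        congr 1
        ext
        simp [α, hm]
    _ = convBy m f (convBy m g h) := by
        ext; simp [convBy]

theorem eq_of_convBy_eq_convUnit
    (hassoc : ∀ a b c : A, m (m (a ⊗ₜ b) ⊗ₜ c) = m (a ⊗ₜ m (b ⊗ₜ c)))
    (hone : ∀ a : A, m (1 ⊗ₜ a) = a ∧ m (a ⊗ₜ 1) = a) {f l r : C →ₗ[R] A}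
    (hl : convBy m l f = convUnit R C A) (hr : convBy m f r = convUnit R C A) : l = r := by
  rw [← convBy_convUnit (fun a => (hone a).2) l, ← hr, ← convBy_assoc hassoc, hl,
    convUnit_convBy (fun a => (hone a).1)]

theorem convBy_comp {p q : C' →ₗ[R] C} {φ : C' →ₗ[R] C}
    (hφ : comul ∘ₗ φ = map p q ∘ₗ comul) (f g : C →ₗ[R] A) :
    convBy m (f ∘ₗ p) (g ∘ₗ q) = convBy m f g ∘ₗ φ := by
  rw [convBy, convBy, comp_assoc, comp_assoc, hφ, map_comp, comp_assoc]

theorem convUnit_comp_coalgHom (φ : C' →ₗc[R] C) :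
    convUnit R C A ∘ₗ φ.toLinearMap = convUnit R C' A := by
  rw [convUnit, comp_assoc, φ.counit_comp, convUnit]

theorem comp_convUnit {f : A →ₗ[R] A} (hf : f 1 = 1) :
    f ∘ₗ convUnit R C A = convUnit R C A := by
  ext c
  simp [convUnit, Algebra.algebraMap_eq_smul_one, hf]

theorem convBy_comm [IsCocomm R C] (f g : C →ₗ[R] A) :
    convBy m f g = convBy (m ∘ₗ (TensorProduct.comm R A A).toLinearMap) g f := by
  conv_lhs => rw [convBy, ← comm_comp_comul R C]
  simp only [convBy, comp_assoc, ← comp_assoc _ (TensorProduct.comm R C C).toLinearMap,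
    map_comp_comm_eq]

theorem convBy_mul_comm_map_eq_convUnit
    (hassoc : ∀ a b c : A, m (m (a ⊗ₜ b) ⊗ₜ c) = m (a ⊗ₜ m (b ⊗ₜ c)))
    (hone : ∀ a : A, m (1 ⊗ₜ a) = a) {f g : C →ₗ[R] A} {f' g' : C' →ₗ[R] A}
    (h : convBy m f g = convUnit R C A) (h' : convBy m f' g' = convUnit R C' A) :
    convBy m (m ∘ₗ (TensorProduct.comm R A A).toLinearMap ∘ₗ map f f') (m ∘ₗ map g g') =
      convUnit R (C ⊗[R] C') A := by
  refine TensorProduct.ext' fun x y => ?_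
  let rx := ℛ R x
  let ry := ℛ R y
  have hx : ∑ i ∈ rx.index, m (f (rx.left i) ⊗ₜ g (rx.right i)) =
      counit (R := R) x • (1 : A) := by
    simpa [convBy, convUnit, ← rx.eq, Algebra.algebraMap_eq_smul_one] using congr($h x)
  have hy : ∑ j ∈ ry.index, m (f' (ry.left j) ⊗ₜ g' (ry.right j)) =
      counit (R := R) y • (1 : A) := by
    simpa [convBy, convUnit, ← ry.eq, Algebra.algebraMap_eq_smul_one] using congr($h' y)
  calc convBy m (m ∘ₗ (TensorProduct.comm R A A).toLinearMap ∘ₗ map f f') (m ∘ₗ map g g') (x ⊗ₜ y)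
      = ∑ j ∈ ry.index, m (f' (ry.left j) ⊗ₜ
          m ((∑ i ∈ rx.index, m (f (rx.left i) ⊗ₜ g (rx.right i))) ⊗ₜ g' (ry.right j))) := by
        rw [convBy, comp_apply, comp_apply, TensorProduct.comul_tmul, ← rx.eq, ← ry.eq]
        simp [sum_tmul, tmul_sum, hassoc]
    _ = convUnit R (C ⊗[R] C') A (x ⊗ₜ y) := by
        simp [hx, hy, convUnit, ← smul_tmul', hone, ← Finset.smul_sum,
          Algebra.algebraMap_eq_smul_one, smul_smul, mul_comm]

end Convolution

section Bialgebra

variable {R A : Type*} [CommSemiring R] [Semiring A] [Bialgebra R A] {m m' : A ⊗[R] A →ₗ[R] A}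

theorem map_one_of_convBy_eq_convUnit (hm : ∀ a : A, m (a ⊗ₜ 1) = a) {S : A →ₗ[R] A}
    (hS : convBy m S id = convUnit R A A) : S 1 = 1 := by
  simpa [convBy, convUnit, Algebra.TensorProduct.one_def, hm] using congr($hS 1)

theorem comp_mul_eq_of_comul_comp_mul'
    (hassoc : ∀ a b c : A, m (m (a ⊗ₜ b) ⊗ₜ c) = m (a ⊗ₜ m (b ⊗ₜ c)))
    (hone : ∀ a : A, m (1 ⊗ₜ a) = a ∧ m (a ⊗ₜ 1) = a)
    (hcompat : comul ∘ₗ mul' R A = map m m' ∘ₗ comul) {S : A →ₗ[R] A}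
    (hS : convBy m S id = convUnit R A A ∧ convBy m id S = convUnit R A A) :
    S ∘ₗ m' = m ∘ₗ (TensorProduct.comm R A A).toLinearMap ∘ₗ map S S := by
  refine (eq_of_convBy_eq_convUnit hassoc hone (f := m) ?_ ?_).symm
  · simpa using convBy_mul_comm_map_eq_convUnit hassoc (fun a => (hone a).1) hS.1 hS.1
  · have h := convBy_comp (m := m) hcompat id S
    rw [id_comp] at h
    rw [h, hS.2]
    exact convUnit_comp_coalgHom (Bialgebra.mulCoalgHom R A)

theorem comp_eq_id_of_isCocomm [IsCocomm R A]
    (hassoc : ∀ a b c : A, m (m (a ⊗ₜ b) ⊗ₜ c) = m (a ⊗ₜ m (b ⊗ₜ c)))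
    (hone : ∀ a : A, m (1 ⊗ₜ a) = a ∧ m (a ⊗ₜ 1) = a) {S S' : A →ₗ[R] A}
    (hS : convBy m S id = convUnit R A A ∧ convBy m id S = convUnit R A A)
    (hS' : convBy m' S' id = convUnit R A A)
    (hanti : S ∘ₗ m' = m ∘ₗ (TensorProduct.comm R A A).toLinearMap ∘ₗ map S S) :
    S ∘ₗ S' = id := by
  refine (eq_of_convBy_eq_convUnit hassoc hone hS.2 ?_).symm
  calc convBy m S (S ∘ₗ S')
      = (m ∘ₗ (TensorProduct.comm R A A).toLinearMap ∘ₗ map S S) ∘ₗ S'.rTensor A ∘ₗ comul := by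
        rw [convBy_comm, convBy, ← map_comp_rTensor]
        simp only [comp_assoc]
    _ = S ∘ₗ convUnit R A A := by rw [← hanti, ← hS']; rfl
    _ = convUnit R A A := comp_convUnit (map_one_of_convBy_eq_convUnit (fun a => (hone a).2) hS.1)

end Bialgebra

end LinearMap

theorem stmt12_general
    (hcocomm : (TensorProduct.comm ℂ B B).toLinearMap ∘ₗ comul (R := ℂ) = comul (R := ℂ) (A := B))
    (μt : ℝ → (B ⊗[ℂ] B →ₗ[ℂ] B))
    (hzero : μt 0 = LinearMap.mul' ℂ B)
    (hassoc : ∀ (t : ℝ) (a b c : B),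
      μt t (μt t (a ⊗ₜ[ℂ] b) ⊗ₜ[ℂ] c) = μt t (a ⊗ₜ[ℂ] μt t (b ⊗ₜ[ℂ] c)))
    (hone : ∀ (t : ℝ) (a : B), μt t ((1 : B) ⊗ₜ[ℂ] a) = a ∧ μt t (a ⊗ₜ[ℂ] (1 : B)) = a)
    (hcompat : ∀ t s : ℝ,
      comul (R := ℂ) ∘ₗ μt (t + s) = TensorProduct.map (μt t) (μt s) ∘ₗ Lam)
    (S : ℝ → (B →ₗ[ℂ] B))
    (hS : ∀ t : ℝ,
      μt t ∘ₗ TensorProduct.map (S t) LinearMap.id ∘ₗ comul (R := ℂ) = unitCounit ∧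
      μt t ∘ₗ TensorProduct.map LinearMap.id (S t) ∘ₗ comul (R := ℂ) = unitCounit) :
    ∀ t : ℝ, S t ∘ₗ S (-t) = LinearMap.id := by
  intro t
  have : IsCocomm ℂ B := ⟨hcocomm⟩
  have hcompat₀ : comul ∘ₗ LinearMap.mul' ℂ B = map (μt t) (μt (-t)) ∘ₗ comul := by
    rw [← hzero, ← add_neg_cancel t]
    exact hcompat t (-t)
  exact LinearMap.comp_eq_id_of_isCocomm (hassoc t) (hone t) (hS t) (hS (-t)).1
    (LinearMap.comp_mul_eq_of_comul_comp_mul' (hassoc t) (hone t) hcompat₀ (hS t))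

/-- Let `(μ_t)_{t∈ℝ}` be a Hopf deformation of the Hopf algebra `B` with deformed
antipodes `S_t`, i.e. `μ_t ∘ (S_t ⊗ id) ∘ Δ = μ_t ∘ (id ⊗ S_t) ∘ Δ = δ(·)1`.  Then
if `B` is
cocommutative (`Δ = τ ∘ Δ`), then `S_t ∘ S_{−t} = id` for all `t ∈ ℝ`. -/
theorem stmt12
    (hcocomm : (TensorProduct.comm ℂ B B).toLinearMap ∘ₗ comul (R := ℂ) = comul (R := ℂ) (A := B))
    (μt : ℝ → (B ⊗[ℂ] B →ₗ[ℂ] B))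
    (hzero : μt 0 = LinearMap.mul' ℂ B)
    (hassoc : ∀ (t : ℝ) (a b c : B),
      μt t (μt t (a ⊗ₜ[ℂ] b) ⊗ₜ[ℂ] c) = μt t (a ⊗ₜ[ℂ] μt t (b ⊗ₜ[ℂ] c)))
    (hone : ∀ (t : ℝ) (a : B), μt t ((1 : B) ⊗ₜ[ℂ] a) = a ∧ μt t (a ⊗ₜ[ℂ] (1 : B)) = a)
    (hcompat : ∀ t s : ℝ,
      comul (R := ℂ) ∘ₗ μt (t + s) = TensorProduct.map (μt t) (μt s) ∘ₗ Lam)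
    (hcont : ∀ x : B ⊗[ℂ] B, Continuous fun t : ℝ => counit (R := ℂ) (μt t x))
    (S : ℝ → (B →ₗ[ℂ] B))
    (hS : ∀ t : ℝ,
      μt t ∘ₗ TensorProduct.map (S t) LinearMap.id ∘ₗ comul (R := ℂ) = unitCounit ∧
      μt t ∘ₗ TensorProduct.map LinearMap.id (S t) ∘ₗ comul (R := ℂ) = unitCounit) :
    ∀ t : ℝ, S t ∘ₗ S (-t) = LinearMap.id :=
  stmt12_general hcocomm μt hzero hassoc hone hcompat S hS
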